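/- For any graph G and real α ≥ 1/2, Δ^(−2α)·R_α(G) ≤ GA₁(G) ≤ δ^(−2α)·R_α(G), with each equality if and only if G is regular. -/

import Mathlib

open Finset Real

variable {V : Type*}

noncomputable def edgeSum (G : SimpleGraph V) [Fintype V] [DecidableRel G.Adj]
    (f : ℝ → ℝ → ℝ) (hf : ∀ a b, f a b = f b a) : ℝ :=
  ∑ e ∈ G.edgeFinset,
    Sym2.lift ⟨fun u v => f (G.degree u) (G.degree v), fun u v => hf _ _⟩ e

noncomputable def GA1 (G : SimpleGraph V) [Fintype V] [DecidableRel G.Adj] : ℝ :=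
  edgeSum G (fun x y => 2 * Real.sqrt (x * y) / (x + y))
    (fun a b => by (try dsimp only); rw [mul_comm a b, add_comm a b])

noncomputable def M1 (G : SimpleGraph V) [Fintype V] [DecidableRel G.Adj] : ℝ :=
  ∑ u : V, (G.degree u : ℝ) ^ 2

noncomputable def M2 (G : SimpleGraph V) [Fintype V] [DecidableRel G.Adj] : ℝ :=
  edgeSum G (fun x y => x * y) (fun a b => mul_comm a b)

noncomputable def randic (G : SimpleGraph V) [Fintype V] [DecidableRel G.Adj] : ℝ :=
  edgeSum G (fun x y => 1 / Real.sqrt (x * y)) (fun a b => by (try dsimp only); rw [mul_comm a b])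

noncomputable def genRandic (G : SimpleGraph V) [Fintype V] [DecidableRel G.Adj] (α : ℝ) : ℝ :=
  edgeSum G (fun x y => (x * y) ^ α) (fun a b => by (try dsimp only); rw [mul_comm a b])

noncomputable def modZagreb (G : SimpleGraph V) [Fintype V] [DecidableRel G.Adj] : ℝ :=
  edgeSum G (fun x y => 1 / (x * y)) (fun a b => by (try dsimp only); rw [mul_comm a b])

noncomputable def NKstar (G : SimpleGraph V) [Fintype V] [DecidableRel G.Adj] : ℝ :=
  ∏ e ∈ G.edgeFinset,
    Sym2.lift ⟨fun u v => ((G.degree u : ℝ) * (G.degree v : ℝ)), fun u v => mul_comm _ _⟩ e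

def GraphRegular (G : SimpleGraph V) [Fintype V] [DecidableRel G.Adj] : Prop :=
  ∃ k, G.IsRegularOfDegree k

/-!
Write `g = √(xy)` and `m = (x + y)/2` for the degrees `x, y` at the ends of an edge, so that the
edge contributes `g / m` to `GA₁` and `Δ^(-2α) (xy)^α = (g/Δ)^(2α)` to `Δ^(-2α) R_α`. Since
`g/Δ ≤ 1` and `2α ≥ 1`, we get `(g/Δ)^(2α) ≤ g/Δ ≤ g/m`, and equality forces `m = Δ`, i.e.
`x = y = Δ`. Symmetrically `g/m ≤ g/δ ≤ (g/δ)^(2α)`, with equality only for `x = y = δ`.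
Summing over the edges gives the bounds; since a connected graph with an edge has no isolated
vertex, equality everywhere means every vertex has degree `Δ` (resp. `δ`).
-/

section EdgeWeight

variable {x y d α : ℝ}

lemma rpow_neg_two_mul_mul_mul_rpow_eq_sqrt_div_rpow (hd : 0 < d) (hx : 0 ≤ x) (hy : 0 ≤ y) :
    d ^ (-(2 * α)) * (x * y) ^ α = (√(x * y) / d) ^ (2 * α) := by
  rw [div_rpow (sqrt_nonneg _) hd.le, rpow_mul (sqrt_nonneg _), rpow_two,
    sq_sqrt (mul_nonneg hx hy), rpow_neg hd.le, inv_mul_eq_div]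

lemma two_mul_sqrt_div_eq_sqrt_div_iff (hx : 0 < x) (hy : 0 < y) (hd : 0 < d) :
    2 * √(x * y) / (x + y) = √(x * y) / d ↔ x + y = 2 * d := by
  have hg : 0 < √(x * y) := sqrt_pos.2 (mul_pos hx hy)
  rw [div_eq_div_iff (by positivity) hd.ne', mul_comm 2, mul_assoc, mul_right_inj' hg.ne',
    eq_comm]

lemma mul_rpow_eq_two_mul_sqrt_div_self (hd : 0 < d) :
    d ^ (-(2 * α)) * (d * d) ^ α = 2 * √(d * d) / (d + d) := by
  rw [rpow_neg_two_mul_mul_mul_rpow_eq_sqrt_div_rpow hd hd.le hd.le, sqrt_mul_self hd.le, div_self hd.ne',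
    one_rpow]
  field_simp
  ring

lemma mul_rpow_le_two_mul_sqrt_div_add (hα : 1 / 2 ≤ α) (hx : 0 < x) (hy : 0 < y)
    (hxd : x ≤ d) (hyd : y ≤ d) :
    d ^ (-(2 * α)) * (x * y) ^ α ≤ 2 * √(x * y) / (x + y) ∧
      (d ^ (-(2 * α)) * (x * y) ^ α = 2 * √(x * y) / (x + y) ↔ x = d ∧ y = d) := by
  have hd : 0 < d := hx.trans_le hxd
  have hg : 0 < √(x * y) := sqrt_pos.2 (mul_pos hx hy)
  have hgd : √(x * y) ≤ d := by
    rw [← sqrt_mul_self hd.le]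
    exact sqrt_le_sqrt (mul_le_mul hxd hyd hy.le hd.le)
  have hpow : d ^ (-(2 * α)) * (x * y) ^ α ≤ √(x * y) / d := by
    rw [rpow_neg_two_mul_mul_mul_rpow_eq_sqrt_div_rpow hd hx.le hy.le]
    exact rpow_le_self_of_le_one (by positivity) ((div_le_one hd).2 hgd) (by linarith)
  have hmean : √(x * y) / d ≤ 2 * √(x * y) / (x + y) := by
    rw [mul_comm 2, ← div_div_eq_mul_div]
    exact div_le_div_of_nonneg_left hg.le (by positivity) (by linarith)
  refine ⟨hpow.trans hmean, fun h => ?_, ?_⟩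
  · have := (two_mul_sqrt_div_eq_sqrt_div_iff hx hy hd).1 (le_antisymm (h ▸ hpow) hmean)
    constructor <;> linarith
  · rintro ⟨rfl, rfl⟩
    exact mul_rpow_eq_two_mul_sqrt_div_self hd

lemma two_mul_sqrt_div_add_le_mul_rpow (hα : 1 / 2 ≤ α) (hd : 0 < d) (hdx : d ≤ x)
    (hdy : d ≤ y) :
    2 * √(x * y) / (x + y) ≤ d ^ (-(2 * α)) * (x * y) ^ α ∧
      (2 * √(x * y) / (x + y) = d ^ (-(2 * α)) * (x * y) ^ α ↔ x = d ∧ y = d) := by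
  have hx : 0 < x := hd.trans_le hdx
  have hy : 0 < y := hd.trans_le hdy
  have hg : 0 < √(x * y) := sqrt_pos.2 (mul_pos hx hy)
  have hdg : d ≤ √(x * y) := by
    rw [← sqrt_mul_self hd.le]
    exact sqrt_le_sqrt (mul_le_mul hdx hdy hd.le hx.le)
  have hmean : 2 * √(x * y) / (x + y) ≤ √(x * y) / d := by
    rw [mul_comm 2, ← div_div_eq_mul_div]
    exact div_le_div_of_nonneg_left hg.le hd (by linarith)
  have hpow : √(x * y) / d ≤ d ^ (-(2 * α)) * (x * y) ^ α := by
    rw [rpow_neg_two_mul_mul_mul_rpow_eq_sqrt_div_rpow hd hx.le hy.le]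
    exact self_le_rpow_of_one_le ((one_le_div hd).2 hdg) (by linarith)
  refine ⟨hmean.trans hpow, fun h => ?_, ?_⟩
  · have := (two_mul_sqrt_div_eq_sqrt_div_iff hx hy hd).1 (le_antisymm hmean (h ▸ hpow))
    constructor <;> linarith
  · rintro ⟨rfl, rfl⟩
    exact (mul_rpow_eq_two_mul_sqrt_div_self hd).symm

end EdgeWeight

section EdgeSum

variable (G : SimpleGraph V) [Fintype V] [DecidableRel G.Adj]

lemma mul_edgeSum (c : ℝ) (f : ℝ → ℝ → ℝ) (hf : ∀ a b, f a b = f b a) :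
    c * edgeSum G f hf = edgeSum G (fun x y => c * f x y) (fun a b => by rw [hf]) := by
  rw [edgeSum, mul_sum]
  refine sum_congr rfl fun e _ => ?_
  induction e using Sym2.ind with
  | _ u v => rfl

variable {G}

lemma forall_mem_edgeFinset_iff {p : Sym2 V → Prop} :
    (∀ e ∈ G.edgeFinset, p e) ↔ ∀ u v, G.Adj u v → p s(u, v) := by
  refine ⟨fun h u v huv => h _ (G.mem_edgeFinset.2 huv), fun h e he => ?_⟩
  induction e using Sym2.ind with
  | _ u v => exact h u v (G.mem_edgeFinset.1 he)

lemma edgeSum_le_edgeSum {f g : ℝ → ℝ → ℝ} (hf : ∀ a b, f a b = f b a)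
    (hg : ∀ a b, g a b = g b a)
    (h : ∀ u v, G.Adj u v → f (G.degree u) (G.degree v) ≤ g (G.degree u) (G.degree v)) :
    edgeSum G f hf ≤ edgeSum G g hg :=
  sum_le_sum (forall_mem_edgeFinset_iff.2 h)

lemma edgeSum_eq_edgeSum_iff {f g : ℝ → ℝ → ℝ} (hf : ∀ a b, f a b = f b a)
    (hg : ∀ a b, g a b = g b a)
    (h : ∀ u v, G.Adj u v → f (G.degree u) (G.degree v) ≤ g (G.degree u) (G.degree v)) :
    edgeSum G f hf = edgeSum G g hg ↔
      ∀ u v, G.Adj u v → f (G.degree u) (G.degree v) = g (G.degree u) (G.degree v) :=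
  (sum_eq_sum_iff_of_le (forall_mem_edgeFinset_iff.2 h)).trans forall_mem_edgeFinset_iff

end EdgeSum

section Regularity

variable {G : SimpleGraph V} [Fintype V] [DecidableRel G.Adj]

lemma SimpleGraph.isRegularOfDegree_iff_forall_adj (hpos : ∀ v, 0 < G.degree v) {k : ℕ} :
    G.IsRegularOfDegree k ↔ ∀ u v, G.Adj u v → G.degree u = k ∧ G.degree v = k := by
  refine ⟨fun h u v _ => ⟨h u, h v⟩, fun h v => ?_⟩
  obtain ⟨w, hvw⟩ := (G.degree_pos_iff_exists_adj v).1 (hpos v)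
  exact (h v w hvw).1

lemma graphRegular_iff_isRegularOfDegree_maxDegree [Nonempty V] :
    GraphRegular G ↔ G.IsRegularOfDegree G.maxDegree :=
  ⟨fun ⟨_, hk⟩ => hk.maxDegree_eq ▸ hk, fun h => ⟨_, h⟩⟩

lemma graphRegular_iff_isRegularOfDegree_minDegree [Nonempty V] :
    GraphRegular G ↔ G.IsRegularOfDegree G.minDegree :=
  ⟨fun ⟨_, hk⟩ => hk.minDegree_eq ▸ hk, fun h => ⟨_, h⟩⟩

end Regularity

theorem stmt15 (G : SimpleGraph V) [Fintype V] [DecidableRel G.Adj]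
    (hc : G.Connected) (hm : G.edgeFinset.Nonempty) (α : ℝ) (hα : 1/2 ≤ α) :
    (G.maxDegree : ℝ) ^ (-(2 * α)) * genRandic G α ≤ GA1 G ∧
    GA1 G ≤ (G.minDegree : ℝ) ^ (-(2 * α)) * genRandic G α ∧
    (GA1 G = (G.maxDegree : ℝ) ^ (-(2 * α)) * genRandic G α ↔ GraphRegular G) ∧
    (GA1 G = (G.minDegree : ℝ) ^ (-(2 * α)) * genRandic G α ↔ GraphRegular G) := by
  have : Nontrivial V := by
    obtain ⟨⟨u, v⟩, huv⟩ := hm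
    exact (G.mem_edgeFinset.1 huv).nontrivial
  have hpos (w : V) : 0 < G.degree w := hc.preconnected.degree_pos_of_nontrivial w
  have hδ : (0 : ℝ) < G.minDegree := Nat.cast_pos.2 hc.preconnected.minDegree_pos_of_nontrivial
  have hlow (u v : V) (huv : G.Adj u v) := by
    simpa only [Nat.cast_inj] using mul_rpow_le_two_mul_sqrt_div_add hα
      (Nat.cast_pos.2 huv.degree_pos_left) (Nat.cast_pos.2 huv.degree_pos_right)
      (Nat.cast_le.2 (G.degree_le_maxDegree u)) (Nat.cast_le.2 (G.degree_le_maxDegree v))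
  have hhigh (u v : V) := by
    simpa only [Nat.cast_inj] using two_mul_sqrt_div_add_le_mul_rpow hα hδ
      (Nat.cast_le.2 (G.minDegree_le_degree u)) (Nat.cast_le.2 (G.minDegree_le_degree v))
  rw [GA1, genRandic, mul_edgeSum, mul_edgeSum]
  refine ⟨edgeSum_le_edgeSum _ _ fun u v h => (hlow u v h).1,
    edgeSum_le_edgeSum _ _ fun u v _ => (hhigh u v).1, ?_, ?_⟩
  · rw [eq_comm, edgeSum_eq_edgeSum_iff _ _ fun u v h => (hlow u v h).1,
      graphRegular_iff_isRegularOfDegree_maxDegree, G.isRegularOfDegree_iff_forall_adj hpos]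
    exact forall₂_congr fun u v => forall_congr' fun h => (hlow u v h).2
  · rw [edgeSum_eq_edgeSum_iff _ _ fun u v _ => (hhigh u v).1,
      graphRegular_iff_isRegularOfDegree_minDegree, G.isRegularOfDegree_iff_forall_adj hpos]
    exact forall₂_congr fun u v => forall_congr' fun _ => (hhigh u v).2
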